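/- Let ζ : V × V → ℝ, let k ≥ 2, and let a, b, c ∈ {1,…,k} be distinct indices with ζ(η_a,η_c) ≠ 0 and ζ(η_b,η_c) ≠ 0. Then the signed sum over all connected graphs G on {1,…,k} containing both edges (a,c) and (b,c) of (-1)^{|E(G)|} ∏_{(i,j)∈E(G)} ζ(η_i,η_j) vanishes, provided ζ(η_a,η_b) = 1. -/

import Mathlib

open scoped Classical

noncomputable def graphWeight {V : Type*} (ζ : V → V → ℝ) {k : ℕ} (η : Fin k → V)
    (G : SimpleGraph (Fin k)) : ℝ :=
  (-1 : ℝ) ^ (Finset.univ.filter (fun p : Fin k × Fin k => p.1 < p.2 ∧ G.Adj p.1 p.2)).card *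
    ∏ p ∈ Finset.univ.filter (fun p : Fin k × Fin k => p.1 < p.2 ∧ G.Adj p.1 p.2),
      ζ (η p.1) (η p.2)

/-!
Toggling the edge `ab` is a sign-reversing involution on the graphs of the sum: since
`ζ(η_a, η_b) = 1`, adding or removing `ab` only flips the sign `(-1)^{|E(G)|}`, and since `a`
and `b` are already joined through `c`, it does not affect connectivity.
-/

open scoped symmDiff
open Finset SimpleGraph

namespace SimpleGraph

variable {V : Type*} {G : SimpleGraph V} {a b : V}

lemma connected_sdiff_edge_iff (h : (G \ edge a b).Reachable a b) :
    (G \ edge a b).Connected ↔ G.Connected :=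
  ⟨fun hG ↦ hG.mono sdiff_le,
    fun hG ↦ hG.connected_delete_edge_of_not_isBridge fun hbr ↦ isBridge_iff.mp hbr h⟩

lemma connected_and_adj_sdiff_edge_iff {c : V} (hac : a ≠ c) (hbc : b ≠ c) :
    ((G \ edge a b).Connected ∧ (G \ edge a b).Adj a c ∧ (G \ edge a b).Adj b c) ↔
      ((G ⊔ edge a b).Connected ∧ (G ⊔ edge a b).Adj a c ∧ (G ⊔ edge a b).Adj b c) := by
  have hc : ∀ x, ¬(edge a b).Adj x c := by simp [edge_adj, hac.symm, hbc.symm]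
  simp only [sdiff_adj, sup_adj, hc, not_false_eq_true, and_true, or_false]
  refine and_congr_left fun ⟨hGac, hGbc⟩ ↦ ?_
  have hreach : (G \ edge a b).Reachable a b :=
    (Adj.reachable ((sdiff_adj ..).2 ⟨hGac, hc a⟩)).trans
      (Adj.reachable ((sdiff_adj ..).2 ⟨hGbc, hc b⟩)).symm
  rw [← sup_sdiff_right_self] at hreach ⊢
  exact connected_sdiff_edge_iff hreach

end SimpleGraph

section GraphWeight

variable {V : Type*} {k : ℕ}

noncomputable def edgePairs (G : SimpleGraph (Fin k)) : Finset (Fin k × Fin k) :=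
  univ.filter fun p ↦ p.1 < p.2 ∧ G.Adj p.1 p.2

lemma graphWeight_eq_prod_edgePairs (ζ : V → V → ℝ) (η : Fin k → V) (G : SimpleGraph (Fin k)) :
    graphWeight ζ η G = ∏ p ∈ edgePairs G, -ζ (η p.1) (η p.2) :=
  (prod_neg _).symm

lemma edgePairs_sup_edge {u v : Fin k} (huv : u < v) (G : SimpleGraph (Fin k)) :
    edgePairs (G ⊔ edge u v) = insert (u, v) (edgePairs (G \ edge u v)) := by
  ext ⟨x, y⟩
  simp only [edgePairs, mem_insert, mem_filter, mem_univ, true_and, sup_adj, sdiff_adj, edge_adj,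
    Prod.mk.injEq]
  grind

lemma notMem_edgePairs_sdiff_edge (u v : Fin k) (G : SimpleGraph (Fin k)) :
    (u, v) ∉ edgePairs (G \ edge u v) := by
  simpa [edgePairs, edge_adj] using fun h _ ↦ h.ne

lemma graphWeight_sup_edge_of_lt (ζ : V → V → ℝ) (η : Fin k → V) {u v : Fin k} (huv : u < v)
    (h1 : ζ (η u) (η v) = 1) (G : SimpleGraph (Fin k)) :
    graphWeight ζ η (G ⊔ edge u v) = -graphWeight ζ η (G \ edge u v) := by
  rw [graphWeight_eq_prod_edgePairs, graphWeight_eq_prod_edgePairs, edgePairs_sup_edge huv,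
    prod_insert (notMem_edgePairs_sdiff_edge u v G), h1, neg_one_mul]

lemma graphWeight_sup_edge (ζ : V → V → ℝ) (hsymm : ∀ u v, ζ u v = ζ v u) (η : Fin k → V)
    {u v : Fin k} (huv : u ≠ v) (h1 : ζ (η u) (η v) = 1) (G : SimpleGraph (Fin k)) :
    graphWeight ζ η (G ⊔ edge u v) = -graphWeight ζ η (G \ edge u v) := by
  rcases huv.lt_or_gt with huv | hvu
  · exact graphWeight_sup_edge_of_lt ζ η huv h1 G
  · rw [edge_comm]
    exact graphWeight_sup_edge_of_lt ζ η hvu (hsymm _ _ ▸ h1) G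

end GraphWeight

theorem cancellation_general {V : Type*} (ζ : V → V → ℝ) (hsymm : ∀ u v, ζ u v = ζ v u)
    (k : ℕ) (η : Fin k → V) (a b c : Fin k)
    (hab : a ≠ b) (hac : a ≠ c) (hbc : b ≠ c)
    (hab1 : ζ (η a) (η b) = 1) :
    (∑ G : SimpleGraph (Fin k),
        if G.Connected ∧ G.Adj a c ∧ G.Adj b c then graphWeight ζ η G else 0) = 0 := by
  set f : SimpleGraph (Fin k) → ℝ := fun G ↦
    if G.Connected ∧ G.Adj a c ∧ G.Adj b c then graphWeight ζ η G else 0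
  have hpair : ∀ G, f (G \ edge a b) + f (G ⊔ edge a b) = 0 := fun G ↦ by
    simp only [f, connected_and_adj_sdiff_edge_iff hac hbc, graphWeight_sup_edge ζ hsymm η hab hab1]
    split_ifs <;> ring
  refine sum_ninvolution (· ∆ edge a b) (fun G ↦ ?_) (fun G _ ↦ ?_) (fun _ ↦ mem_univ _)
    (fun _ ↦ symmDiff_symmDiff_cancel_right ..)
  · by_cases hG : G.Adj a b
    · have := hpair G
      rw [sup_edge_of_adj _ hG] at this
      rw [symmDiff_of_ge ((edge_le_iff _).2 (.inr hG)), add_comm, this]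
    · have := hpair G
      rw [sdiff_edge _ hG] at this
      rw [((disjoint_edge _).2 hG).symmDiff_eq_sup, this]
  · intro hbot
    rw [symmDiff_eq_left] at hbot
    simpa [hbot] using (edge_adj a b a b).2 ⟨.inl ⟨rfl, rfl⟩, hab⟩

/-- The signed sum over all connected graphs on `Fin k` containing the edges `(a,c)` and
`(b,c)` of `(-1)^{|E(G)|} ∏_{(i,j)∈E(G)} ζ(η_i,η_j)` vanishes, provided `ζ(η_a,η_b) = 1`. -/
theorem cancellation {V : Type*} (ζ : V → V → ℝ) (hsymm : ∀ u v, ζ u v = ζ v u)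
    (k : ℕ) (hk : 2 ≤ k) (η : Fin k → V) (a b c : Fin k)
    (hab : a ≠ b) (hac : a ≠ c) (hbc : b ≠ c)
    (hac0 : ζ (η a) (η c) ≠ 0) (hbc0 : ζ (η b) (η c) ≠ 0)
    (hab1 : ζ (η a) (η b) = 1) :
    (∑ G : SimpleGraph (Fin k),
        if G.Connected ∧ G.Adj a c ∧ G.Adj b c then graphWeight ζ η G else 0) = 0 :=
  cancellation_general ζ hsymm k η a b c hab hac hbc hab1
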